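/- Let a, b, q ∈ ℂ and γ ≥ 0, and let Φ be the linear map on 2×2 complex matrices defined by Φ([[x_ee, x_eg],[x_ge, x_gg]]) = [[|a|² x_ee, b x_eg],[b* x_ge, γ x_gg + |q|² x_ee]]. Then Φ is completely positive and trace preserving if and only if γ = 1, |q|² = 1 − |a|², and |b| ≤ |a|. -/

import Mathlib

open Matrix ComplexOrder
noncomputable section

/-- `Λ ⊗ id_n` applied blockwise/entrywise: for linear `Λ` this is the tensor
product of `Λ` with the identity map on `n × n` matrices. -/
def tensorAux {a b : Type*} (Λ : Matrix a a ℂ → Matrix b b ℂ) (n : ℕ)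
    (M : Matrix (a × Fin n) (a × Fin n) ℂ) : Matrix (b × Fin n) (b × Fin n) ℂ :=
  fun p q => Λ (fun i j => M (i, p.2) (j, q.2)) p.1 q.1

/-- A map between matrix algebras is completely positive if `Λ ⊗ id_n` maps positive
semidefinite matrices to positive semidefinite matrices, for every `n`. -/
def IsCompletelyPositive {a b : Type*} [Fintype a] [Fintype b]
    (Λ : Matrix a a ℂ → Matrix b b ℂ) : Prop :=
  ∀ (n : ℕ) (M : Matrix (a × Fin n) (a × Fin n) ℂ), M.PosSemidef → (tensorAux Λ n M).PosSemidef

/-- A map between matrix algebras is positive if it maps positive semidefinite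
matrices to positive semidefinite matrices. -/
def IsPositiveMap {a b : Type*} [Fintype a] [Fintype b]
    (Λ : Matrix a a ℂ → Matrix b b ℂ) : Prop :=
  ∀ M : Matrix a a ℂ, M.PosSemidef → (Λ M).PosSemidef

/-- The excitation-damping map determined by `(φ, ω, B, γ)`:
`Φ(X) = [[φ(X_ee), B X_eg],[X_ge B†, γ X_gg + ω(X_ee)]]`. -/
def EDMap {de dg : ℕ} (φ : Matrix (Fin de) (Fin de) ℂ → Matrix (Fin de) (Fin de) ℂ)
    (ω : Matrix (Fin de) (Fin de) ℂ → Matrix (Fin dg) (Fin dg) ℂ)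
    (B : Matrix (Fin de) (Fin de) ℂ) (γ : ℝ) :
    Matrix (Fin de ⊕ Fin dg) (Fin de ⊕ Fin dg) ℂ →
      Matrix (Fin de ⊕ Fin dg) (Fin de ⊕ Fin dg) ℂ :=
  fun X => fromBlocks (φ X.toBlocks₁₁) (B * X.toBlocks₁₂) (X.toBlocks₂₁ * Bᴴ)
    ((γ : ℂ) • X.toBlocks₂₂ + ω X.toBlocks₁₁)

/-- The qubit excitation-damping map
`Φ([[x_ee, x_eg],[x_ge, x_gg]]) = [[|a|² x_ee, b x_eg],[b* x_ge, γ x_gg + |q|² x_ee]]`. -/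
def QMap (a b q : ℂ) (γ : ℝ) : Matrix (Fin 2) (Fin 2) ℂ → Matrix (Fin 2) (Fin 2) ℂ :=
  fun X => Matrix.of
    ![![((‖a‖ ^ 2 : ℝ) : ℂ) * X 0 0, b * X 0 1],
      ![(starRingEnd ℂ b) * X 1 0, (γ : ℂ) * X 1 1 + ((‖q‖ ^ 2 : ℝ) : ℂ) * X 0 0]]

def kron {n : ℕ} (K : Matrix (Fin 2) (Fin 2) ℂ) : Matrix (Fin 2 × Fin n) (Fin 2 × Fin n) ℂ :=
  fun p q => K p.1 q.1 * (if p.2 = q.2 then 1 else 0)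

lemma tensorAux_conj (K : Matrix (Fin 2) (Fin 2) ℂ) (n : ℕ)
    (M : Matrix (Fin 2 × Fin n) (Fin 2 × Fin n) ℂ) :
    tensorAux (fun X => K * X * Kᴴ) n M = kron K * M * (kron K)ᴴ := by
  ext p q
  show (K * Matrix.of (fun i j => M (i, p.2) (j, q.2)) * Kᴴ) p.1 q.1 = (kron K * M * (kron K)ᴴ : Matrix (Fin 2 × Fin n) (Fin 2 × Fin n) ℂ) p q
  simp [tensorAux, kron, mul_apply, conjTranspose_apply, Fintype.sum_prod_type,
    mul_ite, ite_mul, Finset.mul_sum, Finset.sum_mul, apply_ite (starRingEnd ℂ),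
    Finset.sum_ite_eq]

lemma psd_add {n : Type*} [Fintype n] {A B : Matrix n n ℂ}
    (hA : A.PosSemidef) (hB : B.PosSemidef) : (A + B).PosSemidef := by
  exact hA.add hB

lemma QMap_kraus (a b q : ℂ) (hb : ‖b‖ ≤ ‖a‖)
    (X : Matrix (Fin 2) (Fin 2) ℂ) :
    QMap a b q 1 X =
      !![b, 0; 0, 1] * X * !![b, 0; 0, 1]ᴴ + !![0, 0; q, 0] * X * !![0, 0; q, 0]ᴴ
        + !![((Real.sqrt (‖a‖ ^ 2 - ‖b‖ ^ 2) : ℝ) : ℂ), 0; 0, 0] * X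
            * !![((Real.sqrt (‖a‖ ^ 2 - ‖b‖ ^ 2) : ℝ) : ℂ), 0; 0, 0]ᴴ := by
  have hba : ‖b‖ ^ 2 ≤ ‖a‖ ^ 2 := by
    nlinarith [norm_nonneg b, norm_nonneg a]
  have hcc : ((Real.sqrt (‖a‖ ^ 2 - ‖b‖ ^ 2) : ℝ) : ℂ)
        * ((Real.sqrt (‖a‖ ^ 2 - ‖b‖ ^ 2) : ℝ) : ℂ)
      = ((‖a‖ : ℝ) : ℂ) ^ 2 - ((‖b‖ : ℝ) : ℂ) ^ 2 := by
    rw [← Complex.ofReal_mul, Real.mul_self_sqrt (by linarith)]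
    push_cast; ring
  have hbb : b * starRingEnd ℂ b = ((‖b‖ : ℝ) : ℂ) ^ 2 := by
    rw [Complex.mul_conj, Complex.normSq_eq_norm_sq]; push_cast; ring
  have hqq : q * starRingEnd ℂ q = ((‖q‖ : ℝ) : ℂ) ^ 2 := by
    rw [Complex.mul_conj, Complex.normSq_eq_norm_sq]; push_cast; ring
  refine Matrix.ext fun i j => ?_
  fin_cases i <;> fin_cases j <;>
    simp [QMap, mul_apply, vecMul, dotProduct, conjTranspose_apply, Fin.sum_univ_two]
  · linear_combination (-X 0 0) * hbb + (-X 0 0) * hcc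
  · ring
  · linear_combination (-X 0 0) * hqq


set_option maxRecDepth 10000 in
/-- the qubit map above is completely positive and trace preserving iff
`γ = 1`, `|q|² = 1 − |a|²` and `|b| ≤ |a|`. -/
theorem stmt_15 (a b q : ℂ) (γ : ℝ) (hγ : 0 ≤ γ) :
    (IsCompletelyPositive (QMap a b q γ) ∧
        ∀ X : Matrix (Fin 2) (Fin 2) ℂ, (QMap a b q γ X).trace = X.trace) ↔
      (γ = 1 ∧ ‖q‖ ^ 2 = 1 - ‖a‖ ^ 2 ∧ ‖b‖ ≤ ‖a‖) := by
  constructor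
  · rintro ⟨hCP, hTP⟩
    have hγ1 : γ = 1 := by
      have := hTP !![0, 0; 0, 1]
      simp [QMap, trace, Fin.sum_univ_two] at this
      exact_mod_cast this
    subst hγ1
    have hq : ‖q‖ ^ 2 = 1 - ‖a‖ ^ 2 := by
      have := hTP !![1, 0; 0, 0]
      simp [QMap, trace, Fin.sum_univ_two] at this
      have h2 : ((‖a‖ ^ 2 + ‖q‖ ^ 2 : ℝ) : ℂ) = ((1 : ℝ) : ℂ) := by
        push_cast
        linear_combination this
      have := Complex.ofReal_inj.mp h2
      linarith
    refine ⟨rfl, hq, ?_⟩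
    -- complete positivity at n = 2 gives |b| ≤ |a|
    set A : Matrix (Fin 1) (Fin 2 × Fin 2) ℂ :=
      fun _ p => if p.1 = p.2 then 1 else 0 with hA
    have hM : (Aᴴ * A).PosSemidef := posSemidef_conjTranspose_mul_self A
    have hPSD := hCP 2 (Aᴴ * A) hM
    set x : Fin 2 × Fin 2 → ℂ :=
      fun p => if p = (0, 0) then 1 else if p = (1, 1) then -(starRingEnd ℂ b) else 0 with hx
    have h0 := hPSD.dotProduct_mulVec_nonneg x
    have hbb : b * starRingEnd ℂ b = ((‖b‖ : ℝ) : ℂ) ^ 2 := by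
      rw [Complex.mul_conj, Complex.normSq_eq_norm_sq]; push_cast; ring
    have hval : dotProduct (star x) ((tensorAux (QMap a b q 1) 2 (Aᴴ * A)) *ᵥ x)
        = ((‖a‖ ^ 2 - ‖b‖ ^ 2 : ℝ) : ℂ) := by
      have hAA : Aᴴ * A = Matrix.of (fun i j : Fin 2 × Fin 2 =>
          if i.1 = i.2 ∧ j.1 = j.2 then (1 : ℂ) else 0) := by
        ext i j; rw [mul_apply, Fin.sum_univ_one, conjTranspose_apply]; simp [hA, ite_and]; split_ifs <;> rfl
      rw [hAA]
      simp [tensorAux, QMap, dotProduct, mulVec, mul_apply, conjTranspose_apply,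
        Fintype.sum_prod_type, Fin.sum_univ_two, hx, hA, Prod.ext_iff]
      push_cast
      linear_combination -hbb
    rw [hval] at h0
    have : (0 : ℝ) ≤ ‖a‖ ^ 2 - ‖b‖ ^ 2 := Complex.zero_le_real.mp h0
    nlinarith [norm_nonneg a, norm_nonneg b]
  · rintro ⟨hγ1, hq, hb⟩
    subst hγ1
    constructor
    · intro n M hM
      have heq : tensorAux (QMap a b q 1) n M
          = kron !![b, 0; 0, 1] * M * (kron !![b, 0; 0, 1])ᴴ
            + kron !![0, 0; q, 0] * M * (kron !![0, 0; q, 0])ᴴ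
            + kron !![((Real.sqrt (‖a‖ ^ 2 - ‖b‖ ^ 2) : ℝ) : ℂ), 0; 0, 0] * M
                * (kron !![((Real.sqrt (‖a‖ ^ 2 - ‖b‖ ^ 2) : ℝ) : ℂ), 0; 0, 0])ᴴ := by
        rw [← tensorAux_conj, ← tensorAux_conj, ← tensorAux_conj]
        ext p r
        simp only [tensorAux, QMap_kraus a b q hb, Matrix.add_apply]
        exact congrFun (congrFun (QMap_kraus a b q hb _) p.1) r.1
      rw [heq]
      exact psd_add (psd_add (hM.mul_mul_conjTranspose_same _)
        (hM.mul_mul_conjTranspose_same _)) (hM.mul_mul_conjTranspose_same _)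
    · intro X
      have h1 : ((‖a‖ ^ 2 : ℝ) : ℂ) + ((‖q‖ ^ 2 : ℝ) : ℂ) = 1 := by
        rw [hq]; push_cast; ring
      simp [QMap, trace, Fin.sum_univ_two]
      push_cast at h1 ⊢
      linear_combination X 0 0 * h1
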